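/- Let G be a connected P₄-free graph with at least two vertices such that every minimum connected dominating set of G that induces a single edge {v,w} has A = N(v)\N[w] ≠ ∅ and B = N(w)\N[v] ≠ ∅. Then, with C₁, C₂, C₃ defined as the vertices of C = N(v)∩N(w) dominating A only, B only, or both respectively, G is the join of the induced subgraphs G[{v} ∪ B ∪ C₁ ∪ C₃] and G[{w} ∪ A ∪ C₂]. -/

import Mathlib

open SimpleGraph

/-!
Three forbidden induced paths drive everything: `a - v - w - b` makes `A` complete to `B`;
`x - v - a - b` shows that every `x ∈ C` dominates `A` or `B`; and `a - x - w - y` shows that a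
vertex of `C` dominating `A` is adjacent to every vertex of `C` that does not. Since `{v, w}`
dominates `G`, every vertex lies in exactly one of the two parts, and these three facts give all
the cross edges.
-/

/-- The join of two graphs on disjoint vertex sets: disjoint union plus all cross edges. -/
def gJoin {α β : Type*} (G : SimpleGraph α) (H : SimpleGraph β) : SimpleGraph (α ⊕ β) where
  Adj x y := match x, y with
    | Sum.inl a, Sum.inl b => G.Adj a b
    | Sum.inr a, Sum.inr b => H.Adj a b
    | Sum.inl _, Sum.inr _ => True
    | Sum.inr _, Sum.inl _ => True
  symm := ⟨by rintro (a|a) (b|b) h <;> first | exact h.symm | trivial⟩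
  loopless := ⟨by rintro (a|a) h; exacts [G.ne_of_adj h rfl, H.ne_of_adj h rfl]⟩

/-- A graph is `P₄`-free if it has no induced subgraph isomorphic to the path on 4 vertices. -/
def P4Free {V : Type*} (G : SimpleGraph V) : Prop :=
  IsEmpty (SimpleGraph.pathGraph 4 ↪g G)

/-- `T` is a connected dominating set of `G`. -/
def IsConnDomSet {V : Type*} (G : SimpleGraph V) (T : Set V) : Prop :=
  T.Nonempty ∧ (G.induce T).Connected ∧ ∀ u ∉ T, ∃ t ∈ T, G.Adj u t

/-- `T` is a minimum connected dominating set of `G`. -/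
def IsMinConnDomSet {V : Type*} (G : SimpleGraph V) (T : Set V) : Prop :=
  IsConnDomSet G T ∧ ∀ T' : Set V, IsConnDomSet G T' → T.ncard ≤ T'.ncard

/-- The graph `K₁ ⊔ K₂`: three vertices, exactly one edge (between 0 and 1). -/
def graphK1K2 : SimpleGraph (Fin 3) := SimpleGraph.fromRel (fun a b => a = 0 ∧ b = 1)

/-- The star `K_{1,3}`: vertex 0 adjacent to 1, 2, 3. -/
def graphK13 : SimpleGraph (Fin 4) := SimpleGraph.fromRel (fun a _ => a = 0)

/-- The graph `B = K₁ * (K₁ ⊔ K₂)`: vertex 0 adjacent to all, plus the edge 2-3. -/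
def graphB : SimpleGraph (Fin 4) := SimpleGraph.fromRel (fun a b => a = 0 ∨ (a = 2 ∧ b = 3))

lemma P4Free.false_of_induced_path {V : Type*} {G : SimpleGraph V} (h4 : P4Free G)
    {a b c d : V} (hab : G.Adj a b) (hbc : G.Adj b c) (hcd : G.Adj c d)
    (hac : ¬G.Adj a c) (had : ¬G.Adj a d) (hbd : ¬G.Adj b d) : False := by
  have hac' : a ≠ c := fun h => had (h ▸ hcd)
  have had' : a ≠ d := fun h => hac (h ▸ hcd.symm)
  have hbd' : b ≠ d := fun h => had (h ▸ hab)
  have hinj : Function.Injective ![a, b, c, d] := by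
    intro i j hij
    fin_cases i <;> fin_cases j <;> simp_all [hab.ne, hbc.ne, hcd.ne, eq_comm]
  have hadj (i j : Fin 4) : G.Adj (![a, b, c, d] i) (![a, b, c, d] j) ↔ (pathGraph 4).Adj i j := by
    fin_cases i <;> fin_cases j <;> simp [pathGraph_adj, G.adj_comm, *]
  exact h4.false ⟨⟨_, hinj⟩, hadj _ _⟩

namespace SimpleGraph

variable {V : Type*} (G : SimpleGraph V) (v w : V)

def privNeighborSet : Set V := G.neighborSet v \ (G.neighborSet w ∪ {w})

/- With `A = G.privNeighborSet v w`, `B = G.privNeighborSet w v` and `C = G.commonNeighbors v w`,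
`vPart` and `wPart` are the sets `{v} ∪ B ∪ C₁ ∪ C₃` and `{w} ∪ A ∪ C₂`. -/
def vPart : Set V :=
  {v} ∪ G.privNeighborSet w v ∪
    {x ∈ G.commonNeighbors v w |
      G.privNeighborSet v w ⊆ G.neighborSet x ∧ ¬G.privNeighborSet w v ⊆ G.neighborSet x} ∪
    {x ∈ G.commonNeighbors v w |
      G.privNeighborSet v w ⊆ G.neighborSet x ∧ G.privNeighborSet w v ⊆ G.neighborSet x}

def wPart : Set V :=
  {w} ∪ G.privNeighborSet v w ∪
    {x ∈ G.commonNeighbors v w |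
      ¬G.privNeighborSet v w ⊆ G.neighborSet x ∧ G.privNeighborSet w v ⊆ G.neighborSet x}

variable {G v w}

@[simp]
lemma mem_privNeighborSet {x : V} :
    x ∈ G.privNeighborSet v w ↔ G.Adj v x ∧ ¬G.Adj w x ∧ x ≠ w := by
  simp only [privNeighborSet, Set.mem_sdiff, mem_neighborSet, Set.mem_union, Set.mem_singleton_iff]
  tauto

lemma mem_vPart {x : V} :
    x ∈ G.vPart v w ↔ x = v ∨ x ∈ G.privNeighborSet w v ∨
      (x ∈ G.commonNeighbors v w ∧ G.privNeighborSet v w ⊆ G.neighborSet x) := by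
  simp only [vPart, Set.mem_union, Set.mem_singleton_iff, Set.mem_ofPred_eq]
  tauto

lemma mem_wPart {x : V} :
    x ∈ G.wPart v w ↔ x = w ∨ x ∈ G.privNeighborSet v w ∨
      (x ∈ G.commonNeighbors v w ∧
        ¬G.privNeighborSet v w ⊆ G.neighborSet x ∧ G.privNeighborSet w v ⊆ G.neighborSet x) := by
  simp only [wPart, Set.mem_union, Set.mem_singleton_iff, Set.mem_ofPred_eq]
  tauto

lemma disjoint_vPart_wPart (hvw : v ≠ w) : Disjoint (G.vPart v w) (G.wPart v w) := by
  refine Set.disjoint_left.2 fun x hx₁ hx₂ => ?_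
  rw [mem_vPart] at hx₁
  rw [mem_wPart] at hx₂
  rcases hx₁ with rfl | hx₁ | ⟨hx₁, hA⟩ <;> rcases hx₂ with rfl | hx₂ | ⟨hx₂, hA', -⟩ <;>
    simp_all [mem_commonNeighbors]

end SimpleGraph

namespace P4Free

variable {V : Type*} {G : SimpleGraph V} (h4 : P4Free G) {v w : V}
include h4

lemma adj_of_mem_privNeighborSet (hvw : G.Adj v w) {a b : V}
    (ha : a ∈ G.privNeighborSet v w) (hb : b ∈ G.privNeighborSet w v) : G.Adj a b := by
  rw [mem_privNeighborSet] at ha hb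
  by_contra hab
  exact h4.false_of_induced_path ha.1.symm hvw hb.1 (fun h => ha.2.1 h.symm) hab hb.2.1

lemma privNeighborSet_subset_or_subset (hvw : G.Adj v w) {x : V}
    (hx : x ∈ G.commonNeighbors v w) :
    G.privNeighborSet v w ⊆ G.neighborSet x ∨ G.privNeighborSet w v ⊆ G.neighborSet x := by
  by_contra! ⟨hA, hB⟩
  obtain ⟨a, ha, hxa⟩ := Set.not_subset.1 hA
  obtain ⟨b, hb, hxb⟩ := Set.not_subset.1 hB
  have hab := h4.adj_of_mem_privNeighborSet hvw ha hb
  exact h4.false_of_induced_path hx.1.symm ((mem_privNeighborSet.1 ha).1) hab hxa hxb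
    (mem_privNeighborSet.1 hb).2.1

lemma adj_of_mem_commonNeighbors {x y : V} (hx : x ∈ G.commonNeighbors v w)
    (hy : y ∈ G.commonNeighbors v w) (hxA : G.privNeighborSet v w ⊆ G.neighborSet x)
    (hyA : ¬G.privNeighborSet v w ⊆ G.neighborSet y) : G.Adj x y := by
  obtain ⟨a, ha, hya⟩ := Set.not_subset.1 hyA
  have haw : ¬G.Adj a w := fun h => (mem_privNeighborSet.1 ha).2.1 h.symm
  by_contra hxy
  exact h4.false_of_induced_path (hxA ha).symm hx.2.symm hy.2 haw (fun h => hya h.symm) hxy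

lemma vPart_union_wPart (hvw : G.Adj v w)
    (hdom : ∀ u ∉ ({v, w} : Set V), ∃ t ∈ ({v, w} : Set V), G.Adj u t) :
    G.vPart v w ∪ G.wPart v w = Set.univ := by
  refine Set.eq_univ_of_forall fun u => ?_
  rw [Set.mem_union, mem_vPart, mem_wPart]
  simp only [mem_privNeighborSet, mem_commonNeighbors]
  have hu : u = v ∨ u = w ∨ G.Adj v u ∨ G.Adj w u := by
    by_contra! h
    obtain ⟨t, rfl | rfl, hut⟩ := hdom u (by simp [h.1, h.2.1])
    exacts [h.2.2.1 hut.symm, h.2.2.2 hut.symm]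
  have hC := fun hvu hwu => h4.privNeighborSet_subset_or_subset hvw (x := u) ⟨hvu, hwu⟩
  tauto

lemma adj_of_mem_vPart_of_mem_wPart (hvw : G.Adj v w) {x y : V}
    (hx : x ∈ G.vPart v w) (hy : y ∈ G.wPart v w) : G.Adj x y := by
  rw [mem_vPart] at hx
  rw [mem_wPart] at hy
  rcases hx with rfl | hxB | ⟨hxC, hxA⟩ <;> rcases hy with rfl | hyA | ⟨hyC, hyA, hyB⟩
  · exact hvw
  · exact (mem_privNeighborSet.1 hyA).1
  · exact hyC.1
  · exact (mem_privNeighborSet.1 hxB).1.symm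
  · exact (h4.adj_of_mem_privNeighborSet hvw hyA hxB).symm
  · exact (hyB hxB).symm
  · exact hxC.2.symm
  · exact hxA hyA
  · exact h4.adj_of_mem_commonNeighbors hxC hyC hxA hyA

end P4Free

theorem stmt5_general {V : Type} (G : SimpleGraph V)
    (h4 : P4Free G) (v w : V) (hvw : G.Adj v w)
    (hmin : IsMinConnDomSet G {v, w})
    (A B C C₁ C₂ C₃ V₁ V₂ : Set V)
    (hA : A = G.neighborSet v \ (G.neighborSet w ∪ {w}))
    (hB : B = G.neighborSet w \ (G.neighborSet v ∪ {v}))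
    (hC : C = G.neighborSet v ∩ G.neighborSet w)
    (hC₁ : C₁ = {x ∈ C | A ⊆ G.neighborSet x ∧ ¬ B ⊆ G.neighborSet x})
    (hC₂ : C₂ = {x ∈ C | ¬ A ⊆ G.neighborSet x ∧ B ⊆ G.neighborSet x})
    (hC₃ : C₃ = {x ∈ C | A ⊆ G.neighborSet x ∧ B ⊆ G.neighborSet x})
    (hV₁ : V₁ = {v} ∪ B ∪ C₁ ∪ C₃) (hV₂ : V₂ = {w} ∪ A ∪ C₂) :
    V₁ ∪ V₂ = Set.univ ∧ V₁ ∩ V₂ = ∅ ∧ ∀ x ∈ V₁, ∀ y ∈ V₂, G.Adj x y := by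
  subst hA hB hC hC₁ hC₂ hC₃ hV₁ hV₂
  exact ⟨h4.vPart_union_wPart hvw hmin.1.2.2,
    Set.disjoint_iff_inter_eq_empty.1 (disjoint_vPart_wPart hvw.ne),
    fun x hx y hy => h4.adj_of_mem_vPart_of_mem_wPart hvw hx hy⟩

/-- If {v,w} is a minimum connected dominating set of a connected P₄-free graph G which is
an edge, and A = N(v)\N[w] and B = N(w)\N[v] are both nonempty, then G is the join of the
induced subgraphs on {v} ∪ B ∪ C₁ ∪ C₃ and {w} ∪ A ∪ C₂. -/
theorem stmt5 {V : Type} [Fintype V] (G : SimpleGraph V) (hc : G.Connected)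
    (h4 : P4Free G) (v w : V) (hvw : G.Adj v w)
    (hmin : IsMinConnDomSet G {v, w})
    (A B C C₁ C₂ C₃ V₁ V₂ : Set V)
    (hA : A = G.neighborSet v \ (G.neighborSet w ∪ {w}))
    (hB : B = G.neighborSet w \ (G.neighborSet v ∪ {v}))
    (hC : C = G.neighborSet v ∩ G.neighborSet w)
    (hAne : A.Nonempty) (hBne : B.Nonempty)
    (hC₁ : C₁ = {x ∈ C | A ⊆ G.neighborSet x ∧ ¬ B ⊆ G.neighborSet x})
    (hC₂ : C₂ = {x ∈ C | ¬ A ⊆ G.neighborSet x ∧ B ⊆ G.neighborSet x})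
    (hC₃ : C₃ = {x ∈ C | A ⊆ G.neighborSet x ∧ B ⊆ G.neighborSet x})
    (hV₁ : V₁ = {v} ∪ B ∪ C₁ ∪ C₃) (hV₂ : V₂ = {w} ∪ A ∪ C₂) :
    V₁ ∪ V₂ = Set.univ ∧ V₁ ∩ V₂ = ∅ ∧ ∀ x ∈ V₁, ∀ y ∈ V₂, G.Adj x y :=
  stmt5_general G h4 v w hvw hmin A B C C₁ C₂ C₃ V₁ V₂ hA hB hC hC₁ hC₂ hC₃ hV₁ hV₂
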